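/- (Homotopy Pullback Property.) Let ℰ be a model category, T a cofibrant object, and let W be the pullback of a fibration q : Y → Z along a map i : X → Z, with projections j : W → Y and r : W → X (so that r is also a fibration). Given maps p : T → X and f : T → Y, the composite q∘f is left homotopic to i∘p if and only if there exists a map g : T → W with r∘g = p and with j∘g left homotopic to f. -/

import Mathlib

open CategoryTheory CategoryTheory.Limits

universe v u

noncomputable section

/-- A (Quillen) model structure on a category `ℰ`, given by the classes of weak
equivalences, fibrations and cofibrations, satisfying the usual axioms. -/
structure ModelStruct (ℰ : Type u) [Category.{v} ℰ] : Type (max u v) where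
  weq : MorphismProperty ℰ
  fib : MorphismProperty ℰ
  cof : MorphismProperty ℰ
  weq_comp : ∀ {X Y Z : ℰ} (f : X ⟶ Y) (g : Y ⟶ Z), weq f → weq g → weq (f ≫ g)
  weq_cancel_left : ∀ {X Y Z : ℰ} (f : X ⟶ Y) (g : Y ⟶ Z), weq f → weq (f ≫ g) → weq g
  weq_cancel_right : ∀ {X Y Z : ℰ} (f : X ⟶ Y) (g : Y ⟶ Z), weq g → weq (f ≫ g) → weq f
  weq_retract : ∀ {X Y X' Y' : ℰ} (f : X ⟶ Y) (g : X' ⟶ Y')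
    (i : Arrow.mk f ⟶ Arrow.mk g) (r : Arrow.mk g ⟶ Arrow.mk f),
    i ≫ r = 𝟙 _ → weq g → weq f
  fib_retract : ∀ {X Y X' Y' : ℰ} (f : X ⟶ Y) (g : X' ⟶ Y')
    (i : Arrow.mk f ⟶ Arrow.mk g) (r : Arrow.mk g ⟶ Arrow.mk f),
    i ≫ r = 𝟙 _ → fib g → fib f
  cof_retract : ∀ {X Y X' Y' : ℰ} (f : X ⟶ Y) (g : X' ⟶ Y')
    (i : Arrow.mk f ⟶ Arrow.mk g) (r : Arrow.mk g ⟶ Arrow.mk f),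
    i ≫ r = 𝟙 _ → cof g → cof f
  lift_acof_fib : ∀ {A B X Y : ℰ} (i : A ⟶ B) (p : X ⟶ Y),
    cof i → weq i → fib p → HasLiftingProperty i p
  lift_cof_afib : ∀ {A B X Y : ℰ} (i : A ⟶ B) (p : X ⟶ Y),
    cof i → fib p → weq p → HasLiftingProperty i p
  fact_acof_fib : ∀ {X Y : ℰ} (f : X ⟶ Y), ∃ (Z : ℰ) (i : X ⟶ Z) (p : Z ⟶ Y),
    cof i ∧ weq i ∧ fib p ∧ i ≫ p = f
  fact_cof_afib : ∀ {X Y : ℰ} (f : X ⟶ Y), ∃ (Z : ℰ) (i : X ⟶ Z) (p : Z ⟶ Y),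
    cof i ∧ fib p ∧ weq p ∧ i ≫ p = f

variable {ℰ : Type u} [Category.{v} ℰ]

/-- An object is cofibrant if the map from the initial object is a cofibration. -/
def ModelStruct.Cofibrant [HasInitial ℰ] (M : ModelStruct ℰ) (X : ℰ) : Prop :=
  M.cof (initial.to X)

/-- An object is fibrant if the map to the terminal object is a fibration. -/
def ModelStruct.Fibrant [HasTerminal ℰ] (M : ModelStruct ℰ) (X : ℰ) : Prop :=
  M.fib (terminal.from X)

/-- Left homotopy of two maps, via some cylinder object. -/
def LeftHomotopic [HasBinaryCoproducts ℰ] (M : ModelStruct ℰ) {X Y : ℰ} (f g : X ⟶ Y) : Prop :=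
  ∃ (C : ℰ) (i₁ i₂ : X ⟶ C) (p : C ⟶ X) (H : C ⟶ Y),
    M.cof (coprod.desc i₁ i₂) ∧ M.weq p ∧
    i₁ ≫ p = 𝟙 X ∧ i₂ ≫ p = 𝟙 X ∧ i₁ ≫ H = f ∧ i₂ ≫ H = g

/-- Right homotopy of two maps, via some path object. -/
def RightHomotopic [HasBinaryProducts ℰ] (M : ModelStruct ℰ) {X Y : ℰ} (f g : X ⟶ Y) : Prop :=
  ∃ (P : ℰ) (p₁ p₂ : P ⟶ Y) (s : Y ⟶ P) (H : X ⟶ P),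
    M.fib (prod.lift p₁ p₂) ∧ M.weq s ∧
    s ≫ p₁ = 𝟙 Y ∧ s ≫ p₂ = 𝟙 Y ∧ H ≫ p₁ = f ∧ H ≫ p₂ = g

/-- A weak lattice: a locally finite directed indexing category with a degree function. -/
structure WeakLattice (J : Type) [SmallCategory J] where
  deg : J → ℕ
  locallyFinite : ∀ x y : J, Finite (x ⟶ y)
  connected : IsConnected J
  finitePerDeg : ∀ n : ℕ, Finite { t : J // deg t = n }
  hom_deg_lt : ∀ {x y : J}, (x ⟶ y) → x ≠ y → deg y < deg x
  endo_eq_id : ∀ (x : J) (f : x ⟶ x), f = 𝟙 x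
  to_deg_zero : ∀ x : J, ∃ t : J, deg t = 0 ∧ Nonempty (x ⟶ t)

variable {J : Type} [SmallCategory J]

namespace WeakLattice

/-- Objects of degree at most `k` admitting a map from `x`. -/
def Below (L : WeakLattice J) (x : J) (k : ℕ) (t : J) : Prop :=
  L.deg t ≤ k ∧ Nonempty (x ⟶ t)

/-- The category `∂𝒥ₓᵏ`. -/
abbrev Bdry (L : WeakLattice J) (x : J) (k : ℕ) : Type :=
  ObjectProperty.FullSubcategory (L.Below x k)

/-- The category `𝒥ₓᵏ`: `x` together with `∂𝒥ₓᵏ`. -/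
abbrev Jxk (L : WeakLattice J) (x : J) (k : ℕ) : Type :=
  ObjectProperty.FullSubcategory (fun t => t = x ∨ L.Below x k t)

def bdryIncl (L : WeakLattice J) (x : J) (k : ℕ) : L.Bdry x k ⥤ J :=
  ObjectProperty.ι _

def bdryToJxk (L : WeakLattice J) (x : J) (k : ℕ) : L.Bdry x k ⥤ L.Jxk x k :=
  ObjectProperty.ιOfLE (fun _ ht => Or.inr ht)

/-- `x` as an object of `𝒥ₓᵏ`. -/
def xObj (L : WeakLattice J) (x : J) (k : ℕ) : L.Jxk x k := ⟨x, Or.inl rfl⟩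

end WeakLattice

variable [HasLimits ℰ]

/-- The matching object `Mₓᵏ(Y)`: the limit over the comma category `(x ↓ ∂𝒥ₓᵏ)`. -/
def matchObj (L : WeakLattice J) (x : J) (k : ℕ) (Y : L.Bdry x k ⥤ ℰ) : ℰ :=
  limit (StructuredArrow.proj x (L.bdryIncl x k) ⋙ Y)

/-- Index of pairs `(t, f : x ⟶ t)` with `deg t ≤ k`. -/
abbrev IdxLE (L : WeakLattice J) (x : J) (k : ℕ) : Type :=
  Σ t : L.Bdry x k, (x ⟶ t.obj)

/-- The product `∏_{f : x → t, deg t ≤ k} Y(t)`. -/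
def prodLE (L : WeakLattice J) (x : J) (k : ℕ) (Y : L.Bdry x k ⥤ ℰ) : ℰ :=
  ∏ᶜ fun p : IdxLE L x k => Y.obj p.1

/-- The forgetful (monic) map from the matching object to the underlying product. -/
def forgetMap (L : WeakLattice J) (x : J) (k : ℕ) (Y : L.Bdry x k ⥤ ℰ) :
    matchObj L x k Y ⟶ prodLE L x k Y :=
  Pi.lift fun p => limit.π (StructuredArrow.proj x (L.bdryIncl x k) ⋙ Y)
    (StructuredArrow.mk (Y := p.1) p.2)

/-!
Since `T` is cofibrant, each end of a cylinder on `T` is an acyclic cofibration, so a left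
homotopy starting at `f ≫ q` lifts through the fibration `q` to a homotopy starting at `f`.
Its other end lands over `p ≫ i` and so factors through the pullback `W`. The converse only
uses that left homotopy is symmetric and stable under postcomposition.
-/

namespace ModelStruct

variable {𝒞 : Type u} [Category.{v} 𝒞] (M : ModelStruct 𝒞)

theorem weq_id (X : 𝒞) : M.weq (𝟙 X) := by
  obtain ⟨Z, i, p, -, hi, -, hip⟩ := M.fact_acof_fib (𝟙 X)
  refine M.weq_retract (𝟙 X) i (Arrow.homMk (u := 𝟙 X) (v := i) (by simp))
    (Arrow.homMk (u := 𝟙 X) (v := p) (by simp [hip])) ?_ hi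
  ext <;> simp [hip]

theorem weq_of_comp_eq_id {X Y : 𝒞} {s : X ⟶ Y} {p : Y ⟶ X} (hsp : s ≫ p = 𝟙 X)
    (hp : M.weq p) : M.weq s :=
  M.weq_cancel_right s p hp (hsp ▸ M.weq_id X)

/-- The retract argument. -/
theorem cof_of_hasLiftingProperty {A B : 𝒞} (f : A ⟶ B)
    (h : ∀ {X Y : 𝒞} (p : X ⟶ Y), M.fib p → M.weq p → HasLiftingProperty f p) :
    M.cof f := by
  obtain ⟨Z, i, p, hi, hp, hp', hip⟩ := M.fact_cof_afib f
  have := h p hp hp'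
  have sq : CommSq i f p (𝟙 B) := ⟨by simp [hip]⟩
  refine M.cof_retract f i
    (Arrow.homMk (u := 𝟙 A) (v := sq.lift) (by simp [sq.fac_left]))
    (Arrow.homMk (u := 𝟙 A) (v := p) (by simp [hip])) ?_ hi
  ext <;> simp [sq.fac_right]

theorem cof_comp {A B C : 𝒞} {f : A ⟶ B} {g : B ⟶ C} (hf : M.cof f) (hg : M.cof g) :
    M.cof (f ≫ g) :=
  M.cof_of_hasLiftingProperty _ fun p hp hp' =>
    have := M.lift_cof_afib f p hf hp hp'
    have := M.lift_cof_afib g p hg hp hp'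
    inferInstance

theorem cof_of_isIso {A B : 𝒞} (f : A ⟶ B) [IsIso f] : M.cof f :=
  M.cof_of_hasLiftingProperty f fun _ _ _ => inferInstance

theorem cof_coprod_inl [HasInitial 𝒞] [HasBinaryCoproducts 𝒞] (A : 𝒞) {B : 𝒞}
    (hB : M.Cofibrant B) : M.cof (coprod.inl : A ⟶ A ⨿ B) := by
  refine M.cof_of_hasLiftingProperty _ fun {X Y} p hp hp' => ⟨fun {u v} sq => ?_⟩
  have := M.lift_cof_afib _ p hB hp hp'
  have sqB : CommSq (initial.to X) (initial.to B) p (coprod.inr ≫ v) :=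
    ⟨initial.hom_ext _ _⟩
  refine ⟨⟨⟨coprod.desc u sqB.lift, coprod.inl_desc _ _, ?_⟩⟩⟩
  ext
  · rw [coprod.inl_desc_assoc]; exact sq.w
  · rw [coprod.inr_desc_assoc]; exact sqB.fac_right

theorem cof_of_cof_coprod_desc [HasInitial 𝒞] [HasBinaryCoproducts 𝒞] {A C : 𝒞}
    (hA : M.Cofibrant A) {i₁ i₂ : A ⟶ C} (h : M.cof (coprod.desc i₁ i₂)) : M.cof i₁ :=
  coprod.inl_desc i₁ i₂ ▸ M.cof_comp (M.cof_coprod_inl A hA) h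

end ModelStruct

namespace LeftHomotopic

variable {𝒞 : Type u} [Category.{v} 𝒞] [HasBinaryCoproducts 𝒞] {M : ModelStruct 𝒞}

theorem symm {X Y : 𝒞} {f g : X ⟶ Y} (h : LeftHomotopic M f g) : LeftHomotopic M g f := by
  obtain ⟨C, i₁, i₂, p, H, hc, hp, h₁, h₂, hf, hg⟩ := h
  refine ⟨C, i₂, i₁, p, H, ?_, hp, h₂, h₁, hg, hf⟩
  have hswap : coprod.desc i₂ i₁ = (coprod.braiding X X).hom ≫ coprod.desc i₁ i₂ := by
    ext
    · rw [coprod.braiding_hom, coprod.inl_desc_assoc, coprod.inr_desc, coprod.inl_desc]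
    · rw [coprod.braiding_hom, coprod.inr_desc_assoc, coprod.inl_desc, coprod.inr_desc]
  rw [hswap]
  exact M.cof_comp (M.cof_of_isIso _) hc

theorem comp_right {X Y Z : 𝒞} {f g : X ⟶ Y} (h : LeftHomotopic M f g) (k : Y ⟶ Z) :
    LeftHomotopic M (f ≫ k) (g ≫ k) := by
  obtain ⟨C, i₁, i₂, p, H, hc, hp, h₁, h₂, hf, hg⟩ := h
  exact ⟨C, i₁, i₂, p, H ≫ k, hc, hp, h₁, h₂, by rw [← hf, Category.assoc],
    by rw [← hg, Category.assoc]⟩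

theorem exists_lift_of_fib [HasInitial 𝒞] {T Y Z : 𝒞} (hT : M.Cofibrant T) {q : Y ⟶ Z}
    (hq : M.fib q) {f : T ⟶ Y} {h : T ⟶ Z} (hfh : LeftHomotopic M (f ≫ q) h) :
    ∃ f' : T ⟶ Y, f' ≫ q = h ∧ LeftHomotopic M f f' := by
  obtain ⟨C, i₁, i₂, p, H, hc, hp, h₁, h₂, hf, hg⟩ := hfh
  have := M.lift_acof_fib i₁ q (M.cof_of_cof_coprod_desc hT hc) (M.weq_of_comp_eq_id h₁ hp) hq
  have sq : CommSq f i₁ q H := ⟨hf.symm⟩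
  exact ⟨i₂ ≫ sq.lift, by rw [Category.assoc, sq.fac_right, hg],
    C, i₁, i₂, p, sq.lift, hc, hp, h₁, h₂, sq.fac_left, rfl⟩

end LeftHomotopic

theorem homotopy_pullback_property_general {ℰ : Type u} [Category.{v} ℰ]
    [HasColimits ℰ] (M : ModelStruct ℰ)
    (T : ℰ) (hT : M.Cofibrant T)
    {W X Y Z : ℰ} (j : W ⟶ Y) (r : W ⟶ X) (q : Y ⟶ Z) (i : X ⟶ Z)
    (hq : M.fib q) (hpb : IsPullback j r q i)
    (p : T ⟶ X) (f : T ⟶ Y) :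
    LeftHomotopic M (f ≫ q) (p ≫ i) ↔
      ∃ g : T ⟶ W, g ≫ r = p ∧ LeftHomotopic M (g ≫ j) f := by
  constructor
  · intro hfp
    obtain ⟨f', hf'q, hff'⟩ := hfp.exists_lift_of_fib hT hq
    refine ⟨hpb.lift f' p hf'q, hpb.lift_snd _ _ _, ?_⟩
    rw [hpb.lift_fst]
    exact hff'.symm
  · rintro ⟨g, rfl, hgf⟩
    have hgjq : (g ≫ j) ≫ q = (g ≫ r) ≫ i := by simp only [Category.assoc, hpb.w]
    exact hgjq ▸ (hgf.comp_right q).symm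

/-- STATEMENT 17 (Homotopy Pullback Property) -/
theorem homotopy_pullback_property {ℰ : Type u} [Category.{v} ℰ]
    [HasLimits ℰ] [HasColimits ℰ] (M : ModelStruct ℰ)
    (T : ℰ) (hT : M.Cofibrant T)
    {W X Y Z : ℰ} (j : W ⟶ Y) (r : W ⟶ X) (q : Y ⟶ Z) (i : X ⟶ Z)
    (hq : M.fib q) (hpb : IsPullback j r q i)
    (p : T ⟶ X) (f : T ⟶ Y) :
    LeftHomotopic M (f ≫ q) (p ≫ i) ↔
      ∃ g : T ⟶ W, g ≫ r = p ∧ LeftHomotopic M (g ≫ j) f :=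
  homotopy_pullback_property_general M T hT j r q i hq hpb p f

end
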